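/- arXiv:1602.03360 — 2 statements merged into one kernel-verified Lean document; each statement's English description precedes it below -/
import Mathlib

section
/- For any 0 < ε < 1, there exists an ε-net N of the unit sphere S^{n-1} in ℝ^n (with respect to the Euclidean metric) such that |N| ≤ 2n(1 + 2/ε)^{n-1}. -/
/-!
A maximal `ε`-separated subset of the sphere is an `ε`-net, and it is finite because the balls of
radius `ε / 2` around its points are disjoint and fill part of the shell between the spheres of
radii `1 - ε / 2` and `1 + ε / 2`. Comparing volumes in dimension `n` gives
`|N| (ε / 2) ^ n ≤ (1 + ε / 2) ^ n - (1 - ε / 2) ^ n ≤ n ε (1 + ε / 2) ^ (n - 1)`.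
-/

open Metric MeasureTheory Set

namespace SetRel

variable {X : Type*} {U : SetRel X X}

theorem exists_maximal_isSeparated (U : SetRel X X) (s : Set X) :
    ∃ N, Maximal (fun N ↦ N ⊆ s ∧ U.IsSeparated N) N := by
  obtain ⟨N, -, hN⟩ := zorn_subset_nonempty {N | N ⊆ s ∧ U.IsSeparated N}
    (fun c hc hchain _ ↦ ⟨⋃₀ c,
      ⟨sUnion_subset fun N hN ↦ (hc hN).1,
        (pairwise_sUnion hchain.directedOn).2 fun N hN ↦ (hc hN).2⟩,
      fun _ ↦ subset_sUnion_of_mem⟩) ∅ ⟨empty_subset s, .empty⟩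
  exact ⟨N, hN⟩

theorem exists_finset_isSeparated_isCover [U.IsRefl] [U.IsSymm] {s : Set X} {B : ℕ}
    (hB : ∀ t : Finset X, ↑t ⊆ s → U.IsSeparated ↑t → t.card ≤ B) :
    ∃ t : Finset X, ↑t ⊆ s ∧ U.IsSeparated ↑t ∧ U.IsCover s ↑t := by
  obtain ⟨N, hN⟩ := U.exists_maximal_isSeparated s
  have hfin : N.Finite := by
    by_contra hinf
    obtain ⟨t, htN, hcard⟩ := Set.Infinite.exists_subset_card_eq hinf (B + 1)
    have := hB t (htN.trans hN.1.1) (hN.1.2.mono_right htN)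
    omega
  exact ⟨hfin.toFinset, by simpa using hN.1.1, by simpa using hN.1.2,
    by simpa using .of_maximal_isSeparated hN⟩

end SetRel

namespace Metric

variable {X : Type*} [PseudoMetricSpace X]

theorem exists_finset_pairwise_le_dist_forall_dist_lt {ε : ℝ} (hε : 0 < ε) {s : Set X} {B : ℕ}
    (hB : ∀ t : Finset X, ↑t ⊆ s → (t : Set X).Pairwise (ε ≤ dist · ·) → t.card ≤ B) :
    ∃ t : Finset X, ↑t ⊆ s ∧ (t : Set X).Pairwise (ε ≤ dist · ·) ∧
      ∀ x ∈ s, ∃ y ∈ t, dist x y < ε := by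
  let U : SetRel X X := {p | dist p.1 p.2 < ε}
  have : U.IsRefl := ⟨fun x ↦ by simpa [U] using hε⟩
  have : U.IsSymm := ⟨fun x y ↦ by simp [U, dist_comm]⟩
  have hsep : ∀ t : Set X, U.IsSeparated t ↔ t.Pairwise (ε ≤ dist · ·) := fun t ↦ by
    simp [SetRel.IsSeparated, U]
  obtain ⟨t, hts, htU, hcover⟩ := U.exists_finset_isSeparated_isCover fun t hts htU ↦
    hB t hts ((hsep _).1 htU)
  exact ⟨t, hts, (hsep _).1 htU, hcover⟩

theorem sum_measure_ball_add_measure_closedBall_le [MeasurableSpace X] [OpensMeasurableSpace X]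
    (μ : Measure X) {c : X} {r δ : ℝ} (hδ : 0 < δ) {t : Finset X} (ht : ↑t ⊆ sphere c r)
    (hsep : (t : Set X).Pairwise (2 * δ ≤ dist · ·)) :
    ∑ y ∈ t, μ (ball y δ) + μ (closedBall c (r - δ)) ≤ μ (ball c (r + δ)) := by
  have hdist : ∀ y ∈ t, dist y c = r := fun y hy ↦ ht hy
  have hballs : (t : Set X).PairwiseDisjoint (ball · δ) := fun x hx y hy hxy ↦
    ball_disjoint_ball (by linarith [hsep hx hy hxy])
  have hcore : Disjoint (⋃ y ∈ t, ball y δ) (closedBall c (r - δ)) := by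
    refine disjoint_iUnion₂_left.2 fun y hy ↦ (closedBall_disjoint_ball ?_).symm
    rw [dist_comm, hdist y hy]; linarith
  have hsub : (⋃ y ∈ t, ball y δ) ∪ closedBall c (r - δ) ⊆ ball c (r + δ) :=
    union_subset (iUnion₂_subset fun y hy ↦ ball_subset_ball' (by rw [hdist y hy]; linarith))
      (closedBall_subset_ball (by linarith))
  calc ∑ y ∈ t, μ (ball y δ) + μ (closedBall c (r - δ))
      = μ ((⋃ y ∈ t, ball y δ) ∪ closedBall c (r - δ)) := by
        rw [measure_union hcore measurableSet_closedBall,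
          measure_biUnion_finset hballs fun _ _ ↦ measurableSet_ball]
    _ ≤ μ (ball c (r + δ)) := measure_mono hsub

end Metric

open Module

section FiniteDimensional

variable {E : Type*} [NormedAddCommGroup E] [NormedSpace ℝ E] [FiniteDimensional ℝ E]

theorem card_mul_pow_add_pow_le_of_subset_sphere [Nontrivial E] {δ : ℝ} (hδ : 0 < δ)
    (hδ1 : δ ≤ 1) {t : Finset E} (ht : ↑t ⊆ sphere (0 : E) 1)
    (hsep : (t : Set E).Pairwise (2 * δ ≤ dist · ·)) :
    t.card * δ ^ finrank ℝ E + (1 - δ) ^ finrank ℝ E ≤ (1 + δ) ^ finrank ℝ E := by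
  let _ : MeasurableSpace E := borel E
  have : BorelSpace E := ⟨rfl⟩
  let μ : Measure E := Measure.addHaar
  have hvol := sum_measure_ball_add_measure_closedBall_le μ hδ ht hsep
  simp only [Measure.addHaar_ball μ _ hδ.le, Measure.addHaar_closedBall μ _ (sub_nonneg.2 hδ1),
    Measure.addHaar_ball μ _ (by linarith : 0 ≤ 1 + δ), Finset.sum_const, nsmul_eq_mul,
    ← mul_assoc, ← add_mul] at hvol
  rw [ENNReal.mul_le_mul_iff_left (measure_ball_pos μ 0 one_pos).ne' measure_ball_lt_top.ne,
    ← ENNReal.ofReal_natCast, ← ENNReal.ofReal_mul (by positivity),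
    ← ENNReal.ofReal_add (by positivity) (pow_nonneg (sub_nonneg.2 hδ1) _),
    ENNReal.ofReal_le_ofReal_iff (by positivity)] at hvol
  exact hvol

theorem card_le_of_pairwise_le_dist_of_subset_sphere {ε : ℝ} (hε : 0 < ε) (hε2 : ε ≤ 2)
    {t : Finset E} (ht : ↑t ⊆ sphere (0 : E) 1) (hsep : (t : Set E).Pairwise (ε ≤ dist · ·)) :
    (t.card : ℝ) ≤ 2 * finrank ℝ E * (1 + 2 / ε) ^ (finrank ℝ E - 1) := by
  rcases subsingleton_or_nontrivial E with hE | hE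
  · have : t = ∅ := Finset.eq_empty_of_forall_notMem fun x hx ↦ by
      simpa [Subsingleton.elim x 0] using ht hx
    simp only [this, Finset.card_empty, Nat.cast_zero]
    positivity
  obtain ⟨m, hm⟩ : ∃ m, finrank ℝ E = m + 1 := Nat.exists_eq_add_one.2 finrank_pos
  have hpack := card_mul_pow_add_pow_le_of_subset_sphere (half_pos hε) (by linarith) ht
    fun x hx y hy hxy ↦ by linarith [hsep hx hy hxy]
  have hgap : (1 + ε / 2) ^ (m + 1) - (1 - ε / 2) ^ (m + 1) ≤ ε * (m + 1) * (1 + ε / 2) ^ m := by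
    have h := abs_pow_sub_pow_le (1 + ε / 2) (1 - ε / 2) (m + 1)
    rw [abs_of_nonneg (by linarith : (0 : ℝ) ≤ 1 + ε / 2),
      abs_of_nonneg (by linarith : (0 : ℝ) ≤ 1 - ε / 2), max_eq_left (by linarith),
      show 1 + ε / 2 - (1 - ε / 2) = ε by ring, abs_of_pos hε] at h
    push_cast at h
    simpa using (le_abs_self _).trans h
  have hscale : 2 * (m + 1 : ℝ) * (1 + 2 / ε) ^ m * (ε / 2) ^ (m + 1)
      = ε * (m + 1) * (1 + ε / 2) ^ m := by
    rw [pow_succ, ← mul_assoc, mul_assoc _ ((1 + 2 / ε) ^ m), ← mul_pow,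
      show (1 + 2 / ε) * (ε / 2) = 1 + ε / 2 by field_simp; ring]
    ring
  rw [hm] at hpack ⊢
  push_cast
  refine le_of_mul_le_mul_right ?_ (pow_pos (half_pos hε) (m + 1))
  rw [hscale]
  nlinarith [pow_nonneg (by linarith : (0 : ℝ) ≤ 1 - ε / 2) (m + 1)]

end FiniteDimensional

theorem eps_net_sphere (n : ℕ) (ε : ℝ) (hε0 : 0 < ε) (hε1 : ε < 1) :
    ∃ N : Finset (EuclideanSpace ℝ (Fin n)),
      (↑N : Set (EuclideanSpace ℝ (Fin n))) ⊆ Metric.sphere 0 1 ∧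
      (∀ x ∈ Metric.sphere (0 : EuclideanSpace ℝ (Fin n)) 1, ∃ y ∈ N, dist x y < ε) ∧
      (N.card : ℝ) ≤ 2 * n * (1 + 2 / ε) ^ (n - 1) := by
  have hpacking : ∀ t : Finset (EuclideanSpace ℝ (Fin n)),
      (t : Set (EuclideanSpace ℝ (Fin n))) ⊆ sphere 0 1 →
      (t : Set (EuclideanSpace ℝ (Fin n))).Pairwise (ε ≤ dist · ·) →
      (t.card : ℝ) ≤ 2 * n * (1 + 2 / ε) ^ (n - 1) := fun t ht hsep ↦ by
    simpa using
      card_le_of_pairwise_le_dist_of_subset_sphere hε0 (hε1.le.trans one_le_two) ht hsep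
  obtain ⟨N, hNs, hNsep, hnet⟩ := exists_finset_pairwise_le_dist_forall_dist_lt hε0
    fun t ht hsep ↦ Nat.le_floor (hpacking t ht hsep)
  exact ⟨N, hNs, hnet, hpacking N hNs hNsep⟩
end

section
/- Let A ∈ ℝ^{m×n}, Q ∈ ℝ^{m×k} with orthonormal columns, and Ω ∈ ℝ^{k₂×m} such that ΩQ has full column rank (so (ΩQ)†(ΩQ) = I). Then ‖Q(ΩQ)†ΩA − A‖₂ ≤ (‖(ΩQ)†‖₂ · ‖Ω‖₂ + 1) · ‖A − QQ*A‖₂. -/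
/-- The operator (spectral) norm of a real matrix, viewed as a linear map
between Euclidean spaces. -/
noncomputable def opNorm {m n : ℕ} (A : Matrix (Fin m) (Fin n) ℝ) : ℝ :=
  ‖LinearMap.toContinuousLinearMap (Matrix.toEuclideanLin A)‖

/-- The Moore–Penrose pseudoinverse of a full-column-rank matrix. -/
noncomputable def pinv {a b : ℕ} (M : Matrix (Fin a) (Fin b) ℝ) : Matrix (Fin b) (Fin a) ℝ :=
  (M.transpose * M)⁻¹ * M.transpose

open scoped Matrix.Norms.L2Operator

namespace Matrix

theorem mul_mul_mul_sub_self_eq_of_mul_mul_eq_one {α : Type*} [Ring α]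
    {m n k l : Type*} [Fintype m] [Fintype k] [DecidableEq k] [Fintype l]
    {Q : Matrix m k α} {P : Matrix k l α} {W : Matrix l m α} (hPWQ : P * (W * Q) = 1)
    (R : Matrix k m α) (A : Matrix m n α) :
    Q * P * W * A - A = Q * P * W * (A - Q * R * A) + (Q * R * A - A) := by
  have hfix : Q * P * W * (Q * R * A) = Q * R * A := by
    calc Q * P * W * (Q * R * A) = Q * (P * (W * Q)) * (R * A) := by simp only [Matrix.mul_assoc]
      _ = Q * R * A := by rw [hPWQ, Matrix.mul_one, Matrix.mul_assoc]
  rw [Matrix.mul_sub, hfix]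
  abel

theorem l2_opNorm_mul_of_conjTranspose_mul_self_eq_one {𝕜 : Type*} [RCLike 𝕜]
    {m n l : Type*} [Fintype m] [Fintype n] [Fintype l] [DecidableEq n] [DecidableEq l]
    {Q : Matrix m n 𝕜} (hQ : Qᴴ * Q = 1) (B : Matrix n l 𝕜) : ‖Q * B‖ = ‖B‖ := by
  have hsq : ‖Q * B‖ * ‖Q * B‖ = ‖B‖ * ‖B‖ := by
    rw [← l2_opNorm_conjTranspose_mul_self, ← l2_opNorm_conjTranspose_mul_self,
      conjTranspose_mul, Matrix.mul_assoc, ← Matrix.mul_assoc Qᴴ, hQ, Matrix.one_mul]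
  exact (mul_self_inj (norm_nonneg _) (norm_nonneg _)).mp hsq

end Matrix

theorem opNorm_eq_l2_opNorm {m n : ℕ} (A : Matrix (Fin m) (Fin n) ℝ) : opNorm A = ‖A‖ := rfl

theorem projection_pseudoinverse_bound {m n k k₂ : ℕ}
    (A : Matrix (Fin m) (Fin n) ℝ) (Q : Matrix (Fin m) (Fin k) ℝ)
    (hQ : Q.transpose * Q = 1) (W : Matrix (Fin k₂) (Fin m) ℝ)
    (hfull : pinv (W * Q) * (W * Q) = 1) :
    opNorm (Q * pinv (W * Q) * W * A - A) ≤
      (opNorm (pinv (W * Q)) * opNorm W + 1) * opNorm (A - Q * Q.transpose * A) := by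
  set P := pinv (W * Q)
  set E := A - Q * Q.transpose * A
  have hQ' : Q.conjTranspose * Q = 1 := by rwa [Matrix.conjTranspose_eq_transpose_of_trivial]
  simp only [opNorm_eq_l2_opNorm]
  rw [Matrix.mul_mul_mul_sub_self_eq_of_mul_mul_eq_one hfull]
  calc ‖Q * P * W * E + (Q * Q.transpose * A - A)‖
      ≤ ‖Q * P * W * E‖ + ‖Q * Q.transpose * A - A‖ := norm_add_le _ _
    _ = ‖Q * (P * (W * E))‖ + ‖E‖ := by simp only [Matrix.mul_assoc, norm_sub_rev, E]
    _ ≤ ‖P‖ * (‖W‖ * ‖E‖) + ‖E‖ := by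
        rw [Matrix.l2_opNorm_mul_of_conjTranspose_mul_self_eq_one hQ']
        grw [Matrix.l2_opNorm_mul, Matrix.l2_opNorm_mul]
    _ = (‖P‖ * ‖W‖ + 1) * ‖E‖ := by ring
end
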